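/- arXiv:1807.06831 — 3 statements merged into one kernel-verified Lean document; each statement's English description precedes it below -/
import Mathlib

section
/- For every a > 0 and b ∈ (0,1), if {x_0, x_1, …, x_{n-1}} is a periodic orbit of f_{a,b} contained in (0,1) (i.e., x_{k+1} = f_{a,b}(x_k) for k < n−1 and f_{a,b}(x_{n-1}) = x_0, with all x_k ∈ (0,1)), then its center of mass equals b: (x_0 + x_1 + ⋯ + x_{n-1})/n = b. -/
/-!
In the logit coordinate `L(x) = log (x / (1 - x))` the map becomes a translation by a
position-dependent amount: `L (f x) = L x - a (x - b)`. Summing this along a periodic orbit,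
the left side telescopes to zero, so `∑ a (x_k - b) = 0`, i.e. the mean of the orbit is `b`.
-/

/-- The map `f_{a,b}(x) = x / (x + (1-x) * exp (a (x - b)))`. -/
noncomputable def chaosMap (a b : ℝ) : ℝ → ℝ :=
  fun x => x / (x + (1 - x) * Real.exp (a * (x - b)))

open Finset

noncomputable def logit (x : ℝ) : ℝ := Real.log (x / (1 - x))

lemma logit_chaosMap (a b : ℝ) {x : ℝ} (hx : x ∈ Set.Ioo (0 : ℝ) 1) :
    logit (chaosMap a b x) = logit x - a * (x - b) := by
  obtain ⟨hx0, hx1⟩ := hx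
  have hx1' : 1 - x ≠ 0 := by linarith
  have hE : Real.exp (a * (x - b)) ≠ 0 := (Real.exp_pos _).ne'
  have hD : x + (1 - x) * Real.exp (a * (x - b)) ≠ 0 := by
    have : 0 < 1 - x := by linarith
    positivity
  have hratio : chaosMap a b x / (1 - chaosMap a b x) =
      x / (1 - x) / Real.exp (a * (x - b)) := by
    simp only [chaosMap]
    field_simp
    ring
  rw [logit, hratio, Real.log_div (div_pos hx0 (by linarith)).ne' hE, Real.log_exp, logit]

lemma sum_eq_zero_of_periodic_orbit {α M : Type*} [AddCommGroup M] {f : α → α} {V g : α → M}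
    {s : Set α} (hV : ∀ y ∈ s, V (f y) = V y - g y) {n : ℕ} {x : ℕ → α}
    (hmem : ∀ k < n, x k ∈ s) (hstep : ∀ k, k + 1 < n → x (k + 1) = f (x k))
    (hcycle : f (x (n - 1)) = x 0) :
    ∑ k ∈ range n, g (x k) = 0 := by
  obtain _ | m := n
  · simp
  have htel : ∀ k ∈ range m, g (x k) = V (x k) - V (x (k + 1)) := by
    intro k hk
    have hk := mem_range.mp hk
    rw [hstep k (by omega), hV _ (hmem k (by omega))]
    abel
  have hlast : g (x m) = V (x m) - V (x 0) := by
    rw [← hcycle, Nat.add_sub_cancel, hV _ (hmem m (by omega))]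
    abel
  rw [sum_range_succ, sum_congr rfl htel, sum_range_sub', hlast]
  abel

theorem stmt_3_general (a b : ℝ) (ha : 0 < a)
    (n : ℕ) (hn : 0 < n) (x : ℕ → ℝ)
    (hmem : ∀ k < n, x k ∈ Set.Ioo (0 : ℝ) 1)
    (hstep : ∀ k, k + 1 < n → x (k + 1) = chaosMap a b (x k))
    (hcycle : chaosMap a b (x (n - 1)) = x 0) :
    (∑ k ∈ Finset.range n, x k) / n = b := by
  have hzero : ∑ k ∈ range n, a * (x k - b) = 0 :=
    sum_eq_zero_of_periodic_orbit (fun _ hy => logit_chaosMap a b hy) hmem hstep hcycle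
  rw [← mul_sum, sum_sub_distrib, sum_const, card_range, nsmul_eq_mul] at hzero
  have hn' : (n : ℝ) ≠ 0 := by positivity
  rw [div_eq_iff hn']
  linarith [(mul_eq_zero.mp hzero).resolve_left ha.ne']

/-- For every `a > 0` and `b ∈ (0,1)`, the center of mass of every periodic
orbit `{x_0, …, x_{n-1}}` of `f_{a,b}` contained in `(0,1)` equals `b`. -/
theorem stmt_3 (a b : ℝ) (ha : 0 < a) (hb : b ∈ Set.Ioo (0 : ℝ) 1)
    (n : ℕ) (hn : 0 < n) (x : ℕ → ℝ)
    (hmem : ∀ k < n, x k ∈ Set.Ioo (0 : ℝ) 1)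
    (hstep : ∀ k, k + 1 < n → x (k + 1) = chaosMap a b (x k))
    (hcycle : chaosMap a b (x (n - 1)) = x 0) :
    (∑ k ∈ Finset.range n, x k) / n = b :=
  stmt_3_general a b ha n hn x hmem hstep hcycle
end

section
/- If 0 < a ≤ 8, then for every x ∈ (0,1) the iterates f_a^n(x) of the symmetric map f_a = f_{a,1/2} converge to the fixed point 1/2 as n → ∞. -/
/-!
In the logit coordinate `x = σ(y)`, with `σ` the logistic sigmoid, the symmetric map becomes
`y ↦ y - a (σ(y) - 1/2)`. Since `σ' = σ (1 - σ) ≤ 1/4` with equality only at `0`, we have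
`0 < σ(y) - 1/2 < y/4` for `y > 0`; hence for `a ≤ 8` the shift `a (σ(y) - 1/2)` lies strictly
between `0` and `2y`, and the conjugated map strictly decreases `|y|` away from its fixed point `0`.
A continuous map of a proper metric space that strictly decreases the distance to a fixed point
drives every orbit into it, by a compactness argument on the limit of the decreasing distances.
-/

open Filter Topology Real

theorem tendsto_iterate_of_dist_apply_lt {X : Type*} [MetricSpace X] [ProperSpace X]
    {f : X → X} {p : X} (hf : Continuous f) (hp : f p = p)
    (hlt : ∀ x, x ≠ p → dist (f x) p < dist x p) (x : X) :
    Tendsto (fun n => f^[n] x) atTop (𝓝 p) := by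
  set u : ℕ → X := fun n => f^[n] x
  have hsucc (n : ℕ) : u (n + 1) = f (u n) := Function.iterate_succ_apply' f n x
  have hle (y : X) : dist (f y) p ≤ dist y p := by
    rcases eq_or_ne y p with rfl | hy
    · rw [hp]
    · exact (hlt y hy).le
  have hanti : Antitone fun n => dist (u n) p :=
    antitone_nat_of_succ_le fun n => (hsucc n).symm ▸ hle (u n)
  obtain ⟨L, hL⟩ : ∃ L, Tendsto (fun n => dist (u n) p) atTop (𝓝 L) :=
    ⟨_, tendsto_atTop_ciInf hanti ⟨0, by rintro _ ⟨n, rfl⟩; exact dist_nonneg⟩⟩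
  obtain ⟨z, -, φ, hφ, hz⟩ := (isCompact_closedBall p (dist (u 0) p)).tendsto_subseq
    fun n => Metric.mem_closedBall.mpr (hanti n.zero_le)
  have hzL : dist z p = L :=
    tendsto_nhds_unique (hz.dist tendsto_const_nhds) (hL.comp hφ.tendsto_atTop)
  have hfzL : dist (f z) p = L := by
    refine tendsto_nhds_unique (((hf.tendsto z).comp hz).dist tendsto_const_nhds) ?_
    simpa only [Function.comp_def, hsucc] using
      hL.comp ((tendsto_add_atTop_nat 1).comp hφ.tendsto_atTop)
  have hzp : z = p := by
    by_contra hzp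
    exact (hlt z hzp).ne (hfzL.trans hzL.symm)
  rw [tendsto_iff_dist_tendsto_zero]
  rwa [← hzL, hzp, dist_self] at hL

lemma half_lt_sigmoid {y : ℝ} (hy : 0 < y) : 1 / 2 < sigmoid y := by
  simpa using sigmoid_lt hy

lemma sigmoid_sub_half_lt {y : ℝ} (hy : 0 < y) : sigmoid y - 1 / 2 < y / 4 := by
  suffices StrictMonoOn (fun t => t / 4 - sigmoid t) (Set.Ici 0) by
    have := this Set.self_mem_Ici hy.le hy
    simp only [zero_div, sigmoid_zero, zero_sub] at this
    linarith
  refine strictMonoOn_of_hasDerivWithinAt_pos (convex_Ici 0) (by fun_prop)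
    (fun t _ => (((hasDerivAt_id t).div_const 4).sub (hasDerivAt_sigmoid t)).hasDerivWithinAt)
    fun t ht => ?_
  rw [interior_Ici] at ht
  -- `1/4 - σ (1 - σ) = (σ - 1/2)²`
  nlinarith [half_lt_sigmoid ht]

noncomputable def logitChaosMap (a y : ℝ) : ℝ := y - a * (sigmoid y - 1 / 2)

lemma continuous_logitChaosMap (a : ℝ) : Continuous (logitChaosMap a) := by
  unfold logitChaosMap
  fun_prop

lemma logitChaosMap_zero (a : ℝ) : logitChaosMap a 0 = 0 := by
  simp [logitChaosMap]

lemma logitChaosMap_neg (a y : ℝ) : logitChaosMap a (-y) = -logitChaosMap a y := by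
  simp only [logitChaosMap, sigmoid_neg]
  ring

lemma chaosMap_sigmoid (a y : ℝ) :
    chaosMap a (1 / 2) (sigmoid y) = sigmoid (logitChaosMap a y) := by
  have h1 : 1 - sigmoid y = sigmoid y * exp (-y) := by
    rw [sigmoid_mul_rexp_neg, sigmoid_neg]
  have hs := (sigmoid_pos y).ne'
  rw [chaosMap, h1, logitChaosMap, sigmoid_def (y - _), neg_sub, exp_sub, exp_neg]
  field_simp

lemma abs_logitChaosMap_lt {a : ℝ} (ha : 0 < a) (ha8 : a ≤ 8) {y : ℝ} (hy : y ≠ 0) :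
    |logitChaosMap a y| < |y| := by
  wlog hpos : 0 < y generalizing y
  · simpa [logitChaosMap_neg] using this (neg_ne_zero.mpr hy) (by grind)
  have := half_lt_sigmoid hpos
  have := sigmoid_sub_half_lt hpos
  rw [abs_of_pos hpos, abs_lt, logitChaosMap]
  constructor <;> nlinarith

/-- If `0 < a ≤ 8`, then for every `x ∈ (0,1)` the iterates of the symmetric
map `f_a = f_{a,1/2}` at `x` converge to the fixed point `1/2`. -/
theorem stmt_10 (a : ℝ) (ha : 0 < a) (ha8 : a ≤ 8)
    (x : ℝ) (hx : x ∈ Set.Ioo (0 : ℝ) 1) :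
    Filter.Tendsto (fun n : ℕ => (chaosMap a (1 / 2))^[n] x)
      Filter.atTop (nhds (1 / 2)) := by
  obtain ⟨y, rfl⟩ : x ∈ Set.range sigmoid := range_sigmoid ▸ hx
  have hconj : Function.Semiconj sigmoid (logitChaosMap a) (chaosMap a (1 / 2)) :=
    fun y => (chaosMap_sigmoid a y).symm
  have hlogit : Tendsto (fun n => (logitChaosMap a)^[n] y) atTop (𝓝 0) :=
    tendsto_iterate_of_dist_apply_lt (continuous_logitChaosMap a) (logitChaosMap_zero a)
      (fun z hz => by simpa only [dist_zero_right, Real.norm_eq_abs] using abs_logitChaosMap_lt ha ha8 hz) y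
  have hlim := (continuous_sigmoid.tendsto 0).comp hlogit
  rw [sigmoid_zero, ← one_div] at hlim
  simpa only [Function.comp_def, (hconj.iterate_right _).eq] using hlim
end

section
/- For every b ∈ (0,1) with b ≠ 1/2, there exists a_b > 0 such that for every a > a_b and every positive integer n, the map f_{a,b} has a periodic point of (least) period n, i.e., a point x with f_{a,b}^n(x) = x and f_{a,b}^k(x) ≠ x for all 1 ≤ k < n. -/
open Set Function Filter Real

theorem Function.minimalPeriod_eq_of_iterate_notMem {α : Type*} {f : α → α} {s : Set α}
    {x : α} {n : ℕ} (hn : 0 < n) (hper : IsPeriodicPt f n x) (hx : x ∈ s)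
    (hout : ∀ k, 0 < k → k < n → f^[k] x ∉ s) : minimalPeriod f x = n := by
  refine (hper.minimalPeriod_le hn).antisymm (not_lt.1 fun hlt => ?_)
  exact hout _ (hper.minimalPeriod_pos hn) hlt (iterate_minimalPeriod.symm ▸ hx)

section IntervalCovering

variable {α β : Type*} [ConditionallyCompleteLinearOrder α] [TopologicalSpace α]
  [OrderTopology α] [DenselyOrdered α] [LinearOrder β] [TopologicalSpace β]
  [OrderClosedTopology β]

open OrderDual

theorem ContinuousOn.exists_mem_Icc_apply_eq_mapsTo_Iic {f : α → β} {s t : α} {d : β}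
    (hst : s ≤ t) (hf : ContinuousOn f (Icc s t)) (hs : f s ≤ d) (ht : f t = d) :
    ∃ t' ∈ Icc s t, f t' = d ∧ MapsTo f (Icc s t') (Iic d) := by
  set S := Icc s t ∩ f ⁻¹' {d}
  have hbdd : BddBelow S := ⟨s, fun x hx => hx.1.1⟩
  have hmem : sInf S ∈ S :=
    (hf.preimage_isClosed_of_isClosed isClosed_Icc isClosed_singleton).csInf_mem
      ⟨t, right_mem_Icc.2 hst, ht⟩ hbdd
  refine ⟨sInf S, hmem.1, hmem.2, fun x hx => ?_⟩
  rw [mem_Iic]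
  by_contra! hlt
  have hxt : x ≤ t := hx.2.trans hmem.1.2
  obtain ⟨y, hy, hfy⟩ := intermediate_value_Icc hx.1 (hf.mono (Icc_subset_Icc le_rfl hxt))
    ⟨hs, hlt.le⟩
  have hxy : x = sInf S :=
    le_antisymm hx.2 ((csInf_le hbdd ⟨⟨hy.1, hy.2.trans hxt⟩, hfy⟩).trans hy.2)
  exact hlt.ne' (hxy ▸ hmem.2)

theorem ContinuousOn.exists_mem_Icc_apply_eq_mapsTo_Ici {f : α → β} {s t : α} {d : β}
    (hst : s ≤ t) (hf : ContinuousOn f (Icc s t)) (hs : d ≤ f s) (ht : f t = d) :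
    ∃ t' ∈ Icc s t, f t' = d ∧ MapsTo f (Icc s t') (Ici d) :=
  ContinuousOn.exists_mem_Icc_apply_eq_mapsTo_Iic (β := βᵒᵈ) hst hf hs ht

theorem ContinuousOn.exists_mem_Icc_apply_eq_mapsTo_Iic' {f : α → β} {s t : α} {d : β}
    (hst : s ≤ t) (hf : ContinuousOn f (Icc s t)) (hs : f s = d) (ht : f t ≤ d) :
    ∃ s' ∈ Icc s t, f s' = d ∧ MapsTo f (Icc s' t) (Iic d) := by
  have hf' : ContinuousOn (f ∘ ofDual) (Icc (toDual t) (toDual s)) := by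
    rw [Icc_toDual]; exact hf.comp continuous_ofDual.continuousOn fun x hx => hx
  obtain ⟨s', hs', hfs', hmaps⟩ :=
    ContinuousOn.exists_mem_Icc_apply_eq_mapsTo_Iic (α := αᵒᵈ) (s := toDual t) (t := toDual s)
      hst hf' ht hs
  exact ⟨ofDual s', ⟨hs'.2, hs'.1⟩, hfs',
    fun x hx => hmaps (x := toDual x) ⟨hx.2, hx.1⟩⟩

theorem ContinuousOn.exists_mem_Icc_apply_eq_mapsTo_Ici' {f : α → β} {s t : α} {d : β}
    (hst : s ≤ t) (hf : ContinuousOn f (Icc s t)) (hs : f s = d) (ht : d ≤ f t) :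
    ∃ s' ∈ Icc s t, f s' = d ∧ MapsTo f (Icc s' t) (Ici d) :=
  ContinuousOn.exists_mem_Icc_apply_eq_mapsTo_Iic' (β := βᵒᵈ) hst hf hs ht

theorem ContinuousOn.exists_Icc_subset_mapsTo_surjOn {f : α → β} {a b : α} {c d : β}
    (hf : ContinuousOn f (Icc a b)) (hcd : c ≤ d) (h : SurjOn f (Icc a b) (Icc c d)) :
    ∃ a' b', Icc a' b' ⊆ Icc a b ∧ MapsTo f (Icc a' b') (Icc c d) ∧
      SurjOn f (Icc a' b') (Icc c d) := by
  obtain ⟨s, hs, hfs⟩ := h (left_mem_Icc.2 hcd)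
  obtain ⟨t, ht, hft⟩ := h (right_mem_Icc.2 hcd)
  rcases le_total s t with hst | hts
  · have hf' := hf.mono (Icc_subset_Icc hs.1 ht.2)
    obtain ⟨t', ht', hft', hle⟩ := hf'.exists_mem_Icc_apply_eq_mapsTo_Iic hst (hfs ▸ hcd) hft
    obtain ⟨s', hs', hfs', hge⟩ := ContinuousOn.exists_mem_Icc_apply_eq_mapsTo_Ici' ht'.1
      (hf'.mono (Icc_subset_Icc le_rfl ht'.2)) hfs (hft' ▸ hcd)
    have hsub : Icc s' t' ⊆ Icc a b := Icc_subset_Icc (hs.1.trans hs'.1) (ht'.2.trans ht.2)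
    refine ⟨s', t', hsub, fun x hx => ⟨hge hx, hle ⟨hs'.1.trans hx.1, hx.2⟩⟩, ?_⟩
    rw [← hfs', ← hft']
    exact intermediate_value_Icc hs'.2 (hf.mono hsub)
  · have hf' := hf.mono (Icc_subset_Icc ht.1 hs.2)
    obtain ⟨s', hs', hfs', hge⟩ := hf'.exists_mem_Icc_apply_eq_mapsTo_Ici hts (hft ▸ hcd) hfs
    obtain ⟨t', ht', hft', hle⟩ := ContinuousOn.exists_mem_Icc_apply_eq_mapsTo_Iic' hs'.1
      (hf'.mono (Icc_subset_Icc le_rfl hs'.2)) hft (hfs' ▸ hcd)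
    have hsub : Icc t' s' ⊆ Icc a b := Icc_subset_Icc (ht.1.trans ht'.1) (hs'.2.trans hs.2)
    refine ⟨t', s', hsub, fun x hx => ⟨hge ⟨ht'.1.trans hx.1, hx.2⟩, hle hx⟩, ?_⟩
    rw [← hfs', ← hft']
    exact intermediate_value_Icc' ht'.2 (hf.mono hsub)

theorem exists_isPeriodicPt_of_surjOn_Icc {f : α → α} {lo hi : ℕ → α} {n : ℕ}
    (hle : ∀ i ≤ n, lo i ≤ hi i) (hf : ∀ i < n, ContinuousOn f (Icc (lo i) (hi i)))
    (hsurj : ∀ i < n, SurjOn f (Icc (lo i) (hi i)) (Icc (lo (i + 1)) (hi (i + 1))))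
    (hlo : lo n = lo 0) (hhi : hi n = hi 0) :
    ∃ x, IsPeriodicPt f n x ∧ ∀ i ≤ n, f^[i] x ∈ Icc (lo i) (hi i) := by
  have hnested : ∀ k ≤ n, ∃ a b, (∀ i ≤ k, MapsTo f^[i] (Icc a b) (Icc (lo i) (hi i))) ∧
      ContinuousOn f^[k] (Icc a b) ∧ SurjOn f^[k] (Icc a b) (Icc (lo k) (hi k)) := by
    intro k hk
    induction k with
    | zero =>
      refine ⟨lo 0, hi 0, fun i hi0 => ?_, continuousOn_id, surjOn_id _⟩
      obtain rfl := Nat.le_zero.1 hi0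
      exact mapsTo_id _
    | succ k ih =>
      obtain ⟨a, b, hmaps, hcont, hsurjk⟩ := ih (by omega)
      rw [iterate_succ']
      have hcont' : ContinuousOn (f ∘ f^[k]) (Icc a b) := (hf k hk).comp hcont (hmaps k le_rfl)
      obtain ⟨a', b', hsub, hmaps', hsurj'⟩ :=
        hcont'.exists_Icc_subset_mapsTo_surjOn (hle (k + 1) hk) ((hsurj k hk).comp hsurjk)
      refine ⟨a', b', fun i hik => ?_, hcont'.mono hsub, hsurj'⟩
      rcases hik.lt_or_eq with hik | rfl
      · exact (hmaps i (by omega)).mono_left hsub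
      · rwa [iterate_succ']
  obtain ⟨a, b, hmaps, hcont, hsurjn⟩ := hnested n le_rfl
  rw [hlo, hhi] at hsurjn
  obtain ⟨x, hx, -⟩ := hsurjn (left_mem_Icc.2 (hle 0 (Nat.zero_le _)))
  obtain ⟨y, hy, hfix⟩ := exists_mem_Icc_isFixedPt_of_surjOn hcont (hx.1.trans hx.2)
    (hsurjn.mono subset_rfl (hmaps 0 (Nat.zero_le _)))
  exact ⟨y, hfix, fun i hi => hmaps i hi hy⟩

theorem exists_minimalPeriod_eq_of_surjOn_Icc {f : α → α} {a b c d : α}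
    (hab : a ≤ b) (hbc : b < c) (hcd : c ≤ d)
    (hfI : ContinuousOn f (Icc a b)) (hfJ : ContinuousOn f (Icc c d))
    (hIJ : SurjOn f (Icc a b) (Icc c d)) (hJJ : SurjOn f (Icc c d) (Icc c d))
    (hJI : SurjOn f (Icc c d) (Icc a b)) {n : ℕ} (hn : 0 < n) :
    ∃ x ∈ Icc a d, minimalPeriod f x = n := by
  rcases (Nat.one_le_iff_ne_zero.2 hn.ne').eq_or_lt with rfl | hn2
  · obtain ⟨x, hx, hfix⟩ := exists_mem_Icc_isFixedPt_of_surjOn hfJ hcd hJJ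
    exact ⟨x, ⟨hab.trans (hbc.le.trans hx.1), hx.2⟩,
      minimalPeriod_eq_one_iff_isFixedPt.2 hfix⟩
  -- the itinerary `I J J ⋯ J I` of length `n`, with `I = [a, b]` and `J = [c, d]`
  obtain ⟨x, hper, hit⟩ := exists_isPeriodicPt_of_surjOn_Icc (f := f) (n := n)
    (lo := fun i => if n ∣ i then a else c) (hi := fun i => if n ∣ i then b else d)
    (fun i _ => by split_ifs <;> assumption)
    (fun i _ => by split_ifs <;> assumption)
    (fun i hi => by
      split_ifs with hi0 hi1 hi1
      · exact absurd (Nat.le_of_dvd one_pos ((Nat.dvd_add_right hi0).1 hi1)) (by omega)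
      exacts [hIJ, hJI, hJJ])
    (by simp) (by simp)
  have hxI : x ∈ Icc a b := by simpa using hit 0 (Nat.zero_le _)
  refine ⟨x, ⟨hxI.1, hxI.2.trans (hbc.le.trans hcd)⟩,
    minimalPeriod_eq_of_iterate_notMem hn hper hxI ?_⟩
  intro k hk hkn hkI
  have hkJ : f^[k] x ∈ Icc c d := by
    have hndvd : ¬ n ∣ k := fun h => hk.ne' (Nat.eq_zero_of_dvd_of_lt h hkn)
    simpa [hndvd] using hit k hkn.le
  exact absurd (hkI.2.trans_lt hbc) (not_lt.2 hkJ.1)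

theorem exists_minimalPeriod_eq_of_apply_le_of_le_apply {f : α → α} {p q r s : α}
    (hpq : p ≤ q) (hqr : q < r) (hrs : r ≤ s) (hf : ContinuousOn f (Icc p s))
    (hfp : f p ≤ r) (hfq : s ≤ f q) (hfr : s ≤ f r) (hfs : f s ≤ p) {n : ℕ} (hn : 0 < n) :
    ∃ x ∈ Icc p s, minimalPeriod f x = n := by
  have hfI := hf.mono (Icc_subset_Icc le_rfl (hqr.le.trans hrs))
  have hfJ := hf.mono (Icc_subset_Icc (hpq.trans hqr.le) le_rfl)
  exact exists_minimalPeriod_eq_of_surjOn_Icc hpq hqr hrs hfI hfJ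
    ((Icc_subset_Icc hfp hfq).trans (intermediate_value_Icc hpq hfI))
    ((Icc_subset_Icc (hfs.trans (hpq.trans hqr.le)) hfr).trans (intermediate_value_Icc' hrs hfJ))
    ((Icc_subset_Icc hfs (hqr.le.trans (hrs.trans hfr))).trans (intermediate_value_Icc' hrs hfJ))
    hn

end IntervalCovering

theorem eventually_exp_neg_mul_le {κ ε : ℝ} (hκ : 0 < κ) (hε : 0 < ε) :
    ∀ᶠ a in atTop, exp (-(a * κ)) ≤ ε :=
  ((tendsto_exp_neg_atTop_nhds_zero.comp (tendsto_id.atTop_mul_const hκ)).eventually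
    (gt_mem_nhds hε)).mono fun _ => le_of_lt

section ChaosMap

variable {a b x y : ℝ}

theorem chaosMap_denom_pos (hx : x ∈ Icc (0 : ℝ) 1) :
    0 < x + (1 - x) * exp (a * (x - b)) := by
  rcases hx.2.lt_or_eq with hx1 | rfl
  · linarith [hx.1, mul_pos (sub_pos.2 hx1) (exp_pos (a * (x - b)))]
  · simp

theorem continuousOn_chaosMap : ContinuousOn (chaosMap a b) (Icc 0 1) :=
  continuousOn_id.div (by fun_prop) fun _ hx => (chaosMap_denom_pos hx).ne'

theorem mapsTo_chaosMap : MapsTo (chaosMap a b) (Icc 0 1) (Icc 0 1) := fun _ hx =>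
  ⟨div_nonneg hx.1 (chaosMap_denom_pos hx).le, (div_le_one (chaosMap_denom_pos hx)).2
    (le_add_of_nonneg_right (mul_nonneg (sub_nonneg.2 hx.2) (exp_pos _).le))⟩

theorem chaosMap_one_sub (hx : x ∈ Icc (0 : ℝ) 1) :
    chaosMap a b (1 - x) = 1 - chaosMap a (1 - b) x := by
  have hD := chaosMap_denom_pos (a := a) (b := 1 - b) hx
  have hE : exp (a * (1 - x - b)) = (exp (a * (x - (1 - b))))⁻¹ := by
    rw [← exp_neg]; ring_nf
  set E := exp (a * (x - (1 - b)))
  have hE0 : E ≠ 0 := (exp_pos _).ne'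
  have hD' : 1 - x + (1 - (1 - x)) * E⁻¹ = (x + (1 - x) * E) / E := by field_simp; ring
  simp only [chaosMap, hE, hD']
  rw [div_div_eq_mul_div, eq_sub_iff_add_eq, ← add_div, div_eq_one_iff_eq hD.ne']
  ring

theorem iterate_chaosMap_one_sub (hx : x ∈ Icc (0 : ℝ) 1) (k : ℕ) :
    (chaosMap a b)^[k] (1 - x) = 1 - (chaosMap a (1 - b))^[k] x := by
  induction k with
  | zero => rfl
  | succ k ih =>
    rw [iterate_succ_apply', iterate_succ_apply', ih,
      chaosMap_one_sub (mapsTo_chaosMap.iterate k hx)]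

theorem minimalPeriod_chaosMap_one_sub (hx : x ∈ Icc (0 : ℝ) 1) :
    minimalPeriod (chaosMap a b) (1 - x) = minimalPeriod (chaosMap a (1 - b)) x :=
  minimalPeriod_eq_minimalPeriod_iff.2 fun k => by
    simp only [IsPeriodicPt, IsFixedPt, iterate_chaosMap_one_sub hx, sub_right_inj]

theorem le_chaosMap_of_exp_le (hx : x ∈ Icc (0 : ℝ) 1) (hy : y ≤ 1)
    (h : exp (a * (x - b)) ≤ x * (1 - y)) : y ≤ chaosMap a b x := by
  rw [chaosMap, le_div_iff₀ (chaosMap_denom_pos hx)]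
  have hyx : y * (1 - x) ≤ 1 := by rcases le_total 0 y with hy0 | hy0 <;> nlinarith [hx.1, hx.2]
  nlinarith [exp_pos (a * (x - b))]

theorem chaosMap_le_of_le_exp (hx : x ∈ Icc (0 : ℝ) 1) (hy : 0 ≤ y)
    (h : x ≤ y * (1 - x) * exp (a * (x - b))) : chaosMap a b x ≤ y := by
  rw [chaosMap, div_le_iff₀ (chaosMap_denom_pos hx)]
  nlinarith [hx.1]

theorem eventually_exists_minimalPeriod_chaosMap_eq_of_lt_half (hb0 : 0 < b) (hb : b < 1 / 2) :
    ∀ᶠ a in atTop, ∀ n, 0 < n →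
      ∃ x ∈ Icc (0 : ℝ) 1, minimalPeriod (chaosMap a b) x = n := by
  have hκ : 0 < (1 - 2 * b) / 4 := by linarith
  filter_upwards [eventually_ge_atTop 0, eventually_exp_neg_mul_le hκ (by positivity : 0 < b / 4),
    eventually_exp_neg_mul_le hκ (by linarith : 0 < 1 / 2 - b),
    eventually_exp_neg_mul_le (by positivity : 0 < 3 * b / 4)
      (by nlinarith : 0 < b / 4 * (1 - (b + 1 / 2))),
    eventually_exp_neg_mul_le (by positivity : 0 < b / 2)
      (by nlinarith : 0 < b / 2 * (1 - (b + 1 / 2)))] with a ha hq hq' hE4 hE2 n hn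
  -- `p = exp (-a (2b + 1) / 4)`, split off the factor `q → 0` by which it beats `exp (-a b)`
  set q := exp (-(a * ((1 - 2 * b) / 4)))
  set p := q * exp (-(a * b))
  have hp0 : 0 < p := by positivity
  have hexp_le_one : exp (-(a * b)) ≤ 1 := exp_le_one_iff.2 (by nlinarith)
  have hpq : p ≤ b / 4 := by nlinarith [exp_pos (-(a * b))]
  have hfp : chaosMap a b p ≤ b / 2 := by
    refine chaosMap_le_of_le_exp ⟨hp0.le, by linarith⟩ (by positivity) ?_
    calc p ≤ b / 4 * exp (-(a * b)) := mul_le_mul_of_nonneg_right hq (exp_pos _).le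
      _ ≤ b / 4 * exp (a * (p - b)) := by gcongr; nlinarith
      _ ≤ b / 2 * (1 - p) * exp (a * (p - b)) := by gcongr; nlinarith
  have hfb4 : b + 1 / 2 ≤ chaosMap a b (b / 4) := by
    refine le_chaosMap_of_exp_le ⟨by positivity, by linarith⟩ (by linarith) ?_
    rw [show a * (b / 4 - b) = -(a * (3 * b / 4)) by ring]
    linarith
  have hfb2 : b + 1 / 2 ≤ chaosMap a b (b / 2) := by
    refine le_chaosMap_of_exp_le ⟨by positivity, by linarith⟩ (by linarith) ?_
    rw [show a * (b / 2 - b) = -(a * (b / 2)) by ring]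
    linarith
  have hfs : chaosMap a b (b + 1 / 2) ≤ p := by
    refine chaosMap_le_of_le_exp ⟨by positivity, by linarith⟩ hp0.le ?_
    have hpE : p * exp (a * (b + 1 / 2 - b)) * q = 1 := by
      simp only [p, q, ← exp_add]; rw [exp_eq_one_iff]; ring
    nlinarith [mul_le_mul_of_nonneg_left hq' (by positivity : 0 ≤ p * exp (a * (b + 1 / 2 - b)))]
  obtain ⟨x, hx, hper⟩ := exists_minimalPeriod_eq_of_apply_le_of_le_apply hpq (by linarith)
    (by linarith) (continuousOn_chaosMap.mono (Icc_subset_Icc hp0.le (by linarith))) hfp hfb4 hfb2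
    hfs hn
  exact ⟨x, ⟨hp0.le.trans hx.1, hx.2.trans (by linarith)⟩, hper⟩

theorem eventually_exists_minimalPeriod_chaosMap_eq (hb : b ∈ Ioo (0 : ℝ) 1)
    (hb2 : b ≠ 1 / 2) :
    ∀ᶠ a in atTop, ∀ n, 0 < n →
      ∃ x ∈ Icc (0 : ℝ) 1, minimalPeriod (chaosMap a b) x = n := by
  rcases hb2.lt_or_gt with hlt | hgt
  · exact eventually_exists_minimalPeriod_chaosMap_eq_of_lt_half hb.1 hlt
  filter_upwards [eventually_exists_minimalPeriod_chaosMap_eq_of_lt_half (b := 1 - b)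
    (by linarith [hb.2]) (by linarith)] with a ha n hn
  obtain ⟨x, hx, hper⟩ := ha n hn
  exact ⟨1 - x, ⟨by linarith [hx.2], by linarith [hx.1]⟩,
    (minimalPeriod_chaosMap_one_sub (b := b) hx).trans hper⟩

end ChaosMap

/-- For every `b ∈ (0,1)` with `b ≠ 1/2` there is `a_b > 0` such that for
every `a > a_b` the map `f_{a,b}` has periodic points of all least periods. -/
theorem stmt_13 (b : ℝ) (hb : b ∈ Set.Ioo (0 : ℝ) 1) (hb2 : b ≠ 1 / 2) :
    ∃ a_b : ℝ, 0 < a_b ∧ ∀ a : ℝ, a_b < a → ∀ n : ℕ, 0 < n →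
      ∃ x ∈ Set.Icc (0 : ℝ) 1, (chaosMap a b)^[n] x = x ∧
        ∀ k : ℕ, 1 ≤ k → k < n → (chaosMap a b)^[k] x ≠ x := by
  obtain ⟨a₀, ha₀⟩ :=
    eventually_atTop.1 (eventually_exists_minimalPeriod_chaosMap_eq hb hb2)
  refine ⟨max a₀ 1, lt_max_of_lt_right one_pos, fun a ha n hn => ?_⟩
  obtain ⟨x, hx, rfl⟩ := ha₀ a ((le_max_left _ _).trans ha.le) n hn
  exact ⟨x, hx, iterate_minimalPeriod, fun k hk hkn =>
    not_isPeriodicPt_of_pos_of_lt_minimalPeriod (by omega) hkn⟩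
end
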